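/- Let n ≥ 1 and let R be the free ℤ-module with basis (E_ν)_{ν∈ℤ^n} and multiplication E_ν·E_{ν′} = E_{ν+ν′} if (ν_i−ν_j)(ν′_i−ν′_j) ≥ 0 for all i,j, and 0 otherwise. Then the ring R is reduced (it has no nonzero nilpotent elements). -/

import Mathlib

/-!
Every `ν ∈ ℤⁿ` lies in some chamber `M_σ = {ν | ν_{σ 1} ≤ ⋯ ≤ ν_{σ n}}` (take `σ` sorting `ν`).
Two weights of one chamber are always compatible, and a compatible sum lies in `M_σ` only if
both summands do; hence discarding the basis vectors outside `M_σ` is a ring map from `R` to the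
monoid algebra `ℤ[ℤⁿ]`, a domain. These chamber projections jointly separate the points of `R`,
so a nilpotent `f` projects to `0` in every chamber and is itself `0`.
-/

/-- `ν` and `ν'` are chamber-compatible: `(ν_i - ν_j)(ν'_i - ν'_j) ≥ 0` for all `i, j`. -/
def ChamberCompat {n : ℕ} (ν ν' : Fin n → ℤ) : Prop :=
  ∀ i j, 0 ≤ (ν i - ν j) * (ν' i - ν' j)

instance {n : ℕ} (ν ν' : Fin n → ℤ) : Decidable (ChamberCompat ν ν') :=
  inferInstanceAs (Decidable (∀ i j, 0 ≤ (ν i - ν j) * (ν' i - ν' j)))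

/-- The multiplication on `R = ⊕_{ν ∈ ℤ^n} ℤ·E_ν`, with `E_ν = Finsupp.single ν 1`:
`E_ν · E_{ν'} = E_{ν+ν'}` if `ν, ν'` are chamber-compatible, and `0` otherwise. -/
noncomputable def vmul {n : ℕ} (f g : (Fin n → ℤ) →₀ ℤ) : (Fin n → ℤ) →₀ ℤ :=
  f.sum fun ν a => g.sum fun ν' b =>
    if ChamberCompat ν ν' then Finsupp.single (ν + ν') (a * b) else 0

/-- Powers in `R` with respect to the multiplication `vmul`; `vpow f 0 = E_0` is the unit. -/
noncomputable def vpow {n : ℕ} (f : (Fin n → ℤ) →₀ ℤ) : ℕ → ((Fin n → ℤ) →₀ ℤ)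
  | 0 => Finsupp.single 0 1
  | k + 1 => vmul f (vpow f k)

section

variable {n : ℕ}

lemma vmul_single_single (ν ν' : Fin n → ℤ) (a b : ℤ) :
    vmul (Finsupp.single ν a) (Finsupp.single ν' b) =
      if ChamberCompat ν ν' then Finsupp.single (ν + ν') (a * b) else 0 := by
  simp only [vmul, Finsupp.sum_single_index, mul_zero, zero_mul, Finsupp.single_zero, ite_self]

lemma vmul_add_left (f f' g : (Fin n → ℤ) →₀ ℤ) :
    vmul (f + f') g = vmul f g + vmul f' g := by
  refine Finsupp.sum_add_index' (fun ν => by simp) fun ν a₁ a₂ => ?_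
  rw [← Finsupp.sum_add]
  refine Finsupp.sum_congr fun ν' _ => ?_
  split_ifs <;> simp [add_mul]

lemma vmul_add_right (f g g' : (Fin n → ℤ) →₀ ℤ) :
    vmul f (g + g') = vmul f g + vmul f g' := by
  rw [vmul, vmul, vmul, ← Finsupp.sum_add]
  refine Finsupp.sum_congr fun ν _ => Finsupp.sum_add_index' (fun ν' => by simp) fun ν' b₁ b₂ => ?_
  split_ifs <;> simp [mul_add]

@[simp] lemma vmul_zero (f : (Fin n → ℤ) →₀ ℤ) : vmul f 0 = 0 := by simp [vmul]

@[simp] lemma zero_vmul (g : (Fin n → ℤ) →₀ ℤ) : vmul 0 g = 0 := by simp [vmul]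

def chamber (σ : Equiv.Perm (Fin n)) : AddSubmonoid (Fin n → ℤ) where
  carrier := {ν | Monotone (ν ∘ σ)}
  add_mem' := Monotone.add
  zero_mem' := monotone_const

lemma mem_chamber_sort (ν : Fin n → ℤ) : ν ∈ chamber (Tuple.sort ν) :=
  Tuple.monotone_sort ν

lemma ChamberCompat.of_mem_chamber {σ : Equiv.Perm (Fin n)} {ν ν' : Fin n → ℤ}
    (hν : ν ∈ chamber σ) (hν' : ν' ∈ chamber σ) : ChamberCompat ν ν' := by
  intro i j
  obtain ⟨a, rfl⟩ := σ.surjective i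
  obtain ⟨b, rfl⟩ := σ.surjective j
  rcases le_total a b with hab | hab
  · exact mul_nonneg_of_nonpos_of_nonpos (sub_nonpos.2 (hν hab)) (sub_nonpos.2 (hν' hab))
  · exact mul_nonneg (sub_nonneg.2 (hν hab)) (sub_nonneg.2 (hν' hab))

lemma mem_chamber_of_add_mem {σ : Equiv.Perm (Fin n)} {ν ν' : Fin n → ℤ}
    (hc : ChamberCompat ν ν') (h : ν + ν' ∈ chamber σ) : ν ∈ chamber σ ∧ ν' ∈ chamber σ := by
  constructor <;> intro a b hab <;>
  · have hsum := h hab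
    have hprod := hc (σ a) (σ b)
    simp only [Function.comp_apply, Pi.add_apply] at hsum ⊢
    nlinarith

instance (σ : Equiv.Perm (Fin n)) : DecidablePred (· ∈ chamber σ) := fun ν =>
  inferInstanceAs (Decidable (∀ a b, a ≤ b → ν (σ a) ≤ ν (σ b)))

noncomputable def chamberProj (σ : Equiv.Perm (Fin n)) :
    ((Fin n → ℤ) →₀ ℤ) →+ AddMonoidAlgebra ℤ (Fin n → ℤ) :=
  AddMonoidAlgebra.coeffAddEquiv.symm.toAddMonoidHom.comp (Finsupp.filterAddHom (· ∈ chamber σ))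

lemma coeff_chamberProj (σ : Equiv.Perm (Fin n)) (f : (Fin n → ℤ) →₀ ℤ) :
    (chamberProj σ f).coeff = f.filter (· ∈ chamber σ) :=
  rfl

lemma chamberProj_single (σ : Equiv.Perm (Fin n)) (ν : Fin n → ℤ) (a : ℤ) :
    chamberProj σ (Finsupp.single ν a) =
      if ν ∈ chamber σ then AddMonoidAlgebra.single ν a else 0 := by
  rw [← AddMonoidAlgebra.coeff_inj, coeff_chamberProj]
  split_ifs with hν
  · exact Finsupp.filter_single_of_pos _ hν
  · exact Finsupp.filter_single_of_neg _ hν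

lemma chamberProj_vmul_single (σ : Equiv.Perm (Fin n)) (ν ν' : Fin n → ℤ) (a b : ℤ) :
    chamberProj σ (vmul (Finsupp.single ν a) (Finsupp.single ν' b)) =
      chamberProj σ (Finsupp.single ν a) * chamberProj σ (Finsupp.single ν' b) := by
  rw [vmul_single_single]
  by_cases hboth : ν ∈ chamber σ ∧ ν' ∈ chamber σ
  · obtain ⟨hν, hν'⟩ := hboth
    rw [if_pos (.of_mem_chamber hν hν'), chamberProj_single, chamberProj_single,
      chamberProj_single, if_pos (add_mem hν hν'), if_pos hν, if_pos hν',
      AddMonoidAlgebra.single_mul_single]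
  · have hlhs : chamberProj σ
        (if ChamberCompat ν ν' then Finsupp.single (ν + ν') (a * b) else 0) = 0 := by
      split_ifs with hc
      · rw [chamberProj_single, if_neg fun h => hboth (mem_chamber_of_add_mem hc h)]
      · exact map_zero _
    rw [hlhs, chamberProj_single, chamberProj_single]
    rcases not_and_or.1 hboth with h | h <;> simp [h]

lemma chamberProj_vmul (σ : Equiv.Perm (Fin n)) (f g : (Fin n → ℤ) →₀ ℤ) :
    chamberProj σ (vmul f g) = chamberProj σ f * chamberProj σ g := by
  induction f using Finsupp.induction_linear with
  | zero => simp
  | add f f' hf hf' => rw [vmul_add_left, map_add, map_add, hf, hf', add_mul]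
  | single ν a =>
    induction g using Finsupp.induction_linear with
    | zero => simp
    | add g g' hg hg' => rw [vmul_add_right, map_add, map_add, hg, hg', mul_add]
    | single ν' b => exact chamberProj_vmul_single σ ν ν' a b

lemma chamberProj_vpow (σ : Equiv.Perm (Fin n)) (f : (Fin n → ℤ) →₀ ℤ) (k : ℕ) :
    chamberProj σ (vpow f k) = chamberProj σ f ^ k := by
  induction k with
  | zero => rw [vpow, chamberProj_single, if_pos (zero_mem _), pow_zero, AddMonoidAlgebra.one_def]
  | succ k ih => rw [vpow, chamberProj_vmul, ih, pow_succ']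

lemma eq_zero_of_forall_chamberProj_eq_zero {f : (Fin n → ℤ) →₀ ℤ}
    (h : ∀ σ, chamberProj σ f = 0) : f = 0 := by
  ext ν
  have hν := congr($(h (Tuple.sort ν)).coeff ν)
  rwa [coeff_chamberProj, Finsupp.filter_apply_pos _ _ (mem_chamber_sort ν)] at hν

end

theorem stmt5_general (n : ℕ) (f : (Fin n → ℤ) →₀ ℤ) (k : ℕ)
    (h : vpow f k = 0) : f = 0 := by
  refine eq_zero_of_forall_chamberProj_eq_zero fun σ => IsNilpotent.eq_zero ⟨k, ?_⟩
  rw [← chamberProj_vpow, h, map_zero]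

/-- The ring `R` is reduced: it has no nonzero nilpotent elements. -/
theorem stmt5 (n : ℕ) (hn : 1 ≤ n) (f : (Fin n → ℤ) →₀ ℤ) (k : ℕ) (hk : 1 ≤ k)
    (h : vpow f k = 0) : f = 0 :=
  stmt5_general n f k h
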